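/- arXiv:1304.3355 — 2 statements merged into one kernel-verified Lean document; each statement's English description precedes it below -/
import Mathlib

section
/- Let u : ℝ × [−1,1] → ℝ be continuous and bounded, twice continuously differentiable in the open strip ℝ × (−1,1) with Δu + 1 = 0 there, and satisfying u(x,−1) = u(x,1) = 0 for all x ∈ ℝ. Then u(x,y) = (1−y²)/2 for all (x,y) ∈ ℝ × [−1,1]. -/
/-!
`v = u - (1 - y²)/2` is harmonic, bounded and vanishes on both boundary lines, so it
suffices to show that such a `v` is `≤ 0` (then apply this to `±v`). For `ε > 0` the function
`v + ε (cos 1 · y² - cosh x · cos y)` has Laplacian `2ε cos 1 > 0`, so it cannot have an interior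
maximum, and it is `≤ 0` on the boundary of `[-R, R] × [-1, 1]` once `R` is so large that
`ε cos 1 (cosh R - 1)` exceeds the bound of `v`. Hence `v(x, y) ≤ ε cosh x` for every `ε > 0`.
-/

open Set Metric MeasureTheory

/-- The Laplacian of a function on `ℝ × ℝ`: sum of the two second partial derivatives. -/
noncomputable def lap2 (u : ℝ × ℝ → ℝ) (p : ℝ × ℝ) : ℝ :=
  deriv (fun t => deriv (fun s => u (s, p.2)) t) p.1 +
  deriv (fun t => deriv (fun s => u (p.1, s)) t) p.2

open Filter Topology Real

theorem deriv_deriv_nonpos_of_isLocalMax {f : ℝ → ℝ} {a : ℝ} (h : IsLocalMax f a)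
    (hc : ContinuousAt f a) : deriv (deriv f) a ≤ 0 := by
  by_contra! hpos
  -- A positive second derivative would make `a` also a local minimum, so `f` is locally constant.
  have hmin := isLocalMin_of_deriv_deriv_pos hpos h.deriv_eq_zero hc
  have hconst : f =ᶠ[𝓝 a] fun _ => f a :=
    (h.and hmin).mono fun x hx => le_antisymm hx.1 hx.2
  have h0 := hconst.deriv.deriv_eq
  simp only [deriv_const'] at h0
  simp [h0] at hpos

theorem lap2_nonpos_of_isLocalMax {G : ℝ × ℝ → ℝ} {p : ℝ × ℝ} (h : IsLocalMax G p)
    (hc : ContinuousAt G p) : lap2 G p ≤ 0 := by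
  have h₁ : ContinuousAt (fun s : ℝ => (s, p.2)) p.1 := by fun_prop
  have h₂ : ContinuousAt (fun s : ℝ => (p.1, s)) p.2 := by fun_prop
  exact add_nonpos
    (deriv_deriv_nonpos_of_isLocalMax (h.comp_continuous h₁) (hc.comp h₁))
    (deriv_deriv_nonpos_of_isLocalMax (h.comp_continuous h₂) (hc.comp h₂))

theorem lap2_neg (v : ℝ × ℝ → ℝ) (p : ℝ × ℝ) : lap2 (-v) p = -lap2 v p := by
  simp only [lap2, Pi.neg_apply, deriv.fun_neg']
  ring

theorem deriv_deriv_fun_add {f g : ℝ → ℝ} {x : ℝ} (hf : ContDiffAt ℝ 2 f x)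
    (hg : ContDiffAt ℝ 2 g x) :
    deriv (deriv fun s => f s + g s) x = deriv (deriv f) x + deriv (deriv g) x := by
  simpa [iteratedDeriv_succ] using iteratedDeriv_fun_add hf hg

theorem lap2_add {f g : ℝ × ℝ → ℝ} {p : ℝ × ℝ} (hf : ContDiffAt ℝ 2 f p)
    (hg : ContDiffAt ℝ 2 g p) : lap2 (f + g) p = lap2 f p + lap2 g p := by
  have h₁ : ContDiffAt ℝ 2 (fun s : ℝ => (s, p.2)) p.1 := by fun_prop
  have h₂ : ContDiffAt ℝ 2 (fun s : ℝ => (p.1, s)) p.2 := by fun_prop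
  have hf₁ : ContDiffAt ℝ 2 (fun s => f (s, p.2)) p.1 := hf.comp p.1 h₁
  have hg₁ : ContDiffAt ℝ 2 (fun s => g (s, p.2)) p.1 := hg.comp p.1 h₁
  have hf₂ : ContDiffAt ℝ 2 (fun s => f (p.1, s)) p.2 := hf.comp p.2 h₂
  have hg₂ : ContDiffAt ℝ 2 (fun s => g (p.1, s)) p.2 := hg.comp p.2 h₂
  simp only [lap2, Pi.add_apply]
  rw [deriv_deriv_fun_add hf₁ hg₁, deriv_deriv_fun_add hf₂ hg₂]
  ring

theorem lap2_sub {f g : ℝ × ℝ → ℝ} {p : ℝ × ℝ} (hf : ContDiffAt ℝ 2 f p)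
    (hg : ContDiffAt ℝ 2 g p) : lap2 (f - g) p = lap2 f p - lap2 g p := by
  rw [sub_eq_add_neg, lap2_add hf (show ContDiffAt ℝ 2 (-g) p from hg.neg), lap2_neg,
    sub_eq_add_neg]

theorem nonpos_of_lap2_pos {G : ℝ × ℝ → ℝ} {K U : Set (ℝ × ℝ)} (hK : IsCompact K)
    (hU : IsOpen U) (hUK : U ⊆ K) (hG : ContinuousOn G K) (hlap : ∀ p ∈ U, 0 < lap2 G p)
    (hbdry : ∀ p ∈ K \ U, G p ≤ 0) : ∀ p ∈ K, G p ≤ 0 := by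
  intro p hp
  obtain ⟨q, hqK, hq⟩ := hK.exists_isMaxOn ⟨p, hp⟩ hG
  by_cases hqU : q ∈ U
  · have hKq : K ∈ 𝓝 q := mem_of_superset (hU.mem_nhds hqU) hUK
    exact absurd (lap2_nonpos_of_isLocalMax (hq.isLocalMax hKq) (hG.continuousAt hKq))
      (hlap q hqU).not_ge
  · exact (hq hp).trans (hbdry q ⟨hqK, hqU⟩)

theorem Real.tendsto_cosh_atTop : Tendsto cosh atTop atTop := by
  refine tendsto_atTop_mono (fun x => ?_) (tendsto_exp_atTop.atTop_div_const two_pos)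
  rw [cosh_eq]
  linarith [exp_pos (-x)]

theorem Real.cos_one_le_cos {y : ℝ} (hy : y ∈ Icc (-1 : ℝ) 1) : cos 1 ≤ cos y := by
  rw [← cos_abs y]
  exact cos_le_cos_of_nonneg_of_le_pi (abs_nonneg y) (by linarith [pi_gt_three]) (abs_le.mpr hy)

/-- `cosh x · cos y` is harmonic and outgrows any bound as `|x| → ∞`; the term `cos 1 · y²` makes
the Laplacian strictly positive while keeping the barrier `≤ 0` on the lines `y = ±1`. -/
noncomputable def stripBarrier (ε : ℝ) (p : ℝ × ℝ) : ℝ :=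
  ε * (cos 1 * p.2 ^ 2 - cosh p.1 * cos p.2)

theorem contDiff_stripBarrier (ε : ℝ) : ContDiff ℝ 2 (stripBarrier ε) := by
  unfold stripBarrier
  fun_prop

theorem lap2_stripBarrier (ε : ℝ) (p : ℝ × ℝ) : lap2 (stripBarrier ε) p = 2 * ε * cos 1 := by
  simp (disch := fun_prop) [lap2, stripBarrier]
  ring

theorem neg_mul_cosh_le_stripBarrier {ε : ℝ} (hε : 0 ≤ ε) (x y : ℝ) :
    -(ε * cosh x) ≤ stripBarrier ε (x, y) := by
  have hcos : cosh x * cos y ≤ cosh x := mul_le_of_le_one_right (cosh_pos x).le (cos_le_one y)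
  unfold stripBarrier
  nlinarith [mul_nonneg cos_one_pos.le (sq_nonneg y)]

theorem stripBarrier_le {ε : ℝ} (hε : 0 ≤ ε) (x : ℝ) {y : ℝ} (hy : y ∈ Icc (-1 : ℝ) 1) :
    stripBarrier ε (x, y) ≤ -(ε * cos 1 * (cosh x - 1)) := by
  have hy2 : y ^ 2 ≤ 1 := by nlinarith [hy.1, hy.2]
  have hcos : cosh x * cos 1 ≤ cosh x * cos y :=
    mul_le_mul_of_nonneg_left (cos_one_le_cos hy) (cosh_pos x).le
  unfold stripBarrier
  nlinarith [mul_le_mul_of_nonneg_left hy2 cos_one_pos.le]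

/-- Phragmén–Lindelöf principle on the strip `ℝ × [-1, 1]`. -/
theorem nonpos_of_subharmonic_on_strip {v : ℝ × ℝ → ℝ}
    (hc : ContinuousOn v (univ ×ˢ Icc (-1 : ℝ) 1))
    (hb : ∃ C : ℝ, ∀ p ∈ univ ×ˢ Icc (-1 : ℝ) 1, v p ≤ C)
    (hd : ContDiffOn ℝ 2 v (univ ×ˢ Ioo (-1 : ℝ) 1))
    (hlap : ∀ p ∈ univ ×ˢ Ioo (-1 : ℝ) 1, 0 ≤ lap2 v p)
    (hbc : ∀ x : ℝ, v (x, -1) ≤ 0 ∧ v (x, 1) ≤ 0) :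
    ∀ p ∈ univ ×ˢ Icc (-1 : ℝ) 1, v p ≤ 0 := by
  obtain ⟨C, hC⟩ := hb
  rintro ⟨x₀, y₀⟩ ⟨-, hy₀⟩
  suffices h : ∀ ε > 0, v (x₀, y₀) ≤ ε * cosh x₀ by
    refine le_of_forall_pos_le_add fun η hη => ?_
    simpa [div_mul_cancel₀ _ (cosh_pos x₀).ne'] using h (η / cosh x₀) (by positivity)
  intro ε hε
  have hεc : 0 < ε * cos 1 := mul_pos hε cos_one_pos
  obtain ⟨R, hRC, hRx⟩ : ∃ R, C / (ε * cos 1) + 1 ≤ cosh R ∧ |x₀| ≤ R :=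
    ((tendsto_cosh_atTop.eventually_ge_atTop _).and (eventually_ge_atTop _)).exists
  have hRC' : C ≤ ε * cos 1 * (cosh R - 1) := by
    rw [← div_le_iff₀' hεc]
    linarith
  have hG := nonpos_of_lap2_pos (G := v + stripBarrier ε)
    (isCompact_Icc.prod isCompact_Icc) (isOpen_Ioo.prod isOpen_Ioo)
    (prod_mono Ioo_subset_Icc_self Ioo_subset_Icc_self)
    ((hc.mono (prod_mono (subset_univ _) subset_rfl)).add
      (contDiff_stripBarrier ε).continuous.continuousOn) ?lap ?bdry (x₀, y₀) ⟨abs_le.mp hRx, hy₀⟩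
  · rw [Pi.add_apply] at hG
    linarith [neg_mul_cosh_le_stripBarrier hε.le x₀ y₀]
  case lap =>
    rintro p ⟨-, hy⟩
    have hp : univ ×ˢ Ioo (-1 : ℝ) 1 ∈ 𝓝 p := (isOpen_univ.prod isOpen_Ioo).mem_nhds ⟨trivial, hy⟩
    rw [lap2_add (hd.contDiffAt hp) (contDiff_stripBarrier ε).contDiffAt, lap2_stripBarrier]
    linarith [hlap p ⟨trivial, hy⟩]
  case bdry =>
    rintro ⟨x, y⟩ ⟨⟨hx, hy⟩, hxy⟩
    have hbar := stripBarrier_le hε.le x hy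
    simp only [Pi.add_apply]
    by_cases hside : x ∈ Ioo (-R) R
    · have hy' : y = -1 ∨ y = 1 := by
        by_contra! hne
        exact hxy ⟨hside, lt_of_le_of_ne hy.1 hne.1.symm, lt_of_le_of_ne hy.2 hne.2⟩
      have hv : v (x, y) ≤ 0 := by rcases hy' with rfl | rfl <;> simp [hbc x]
      nlinarith [one_le_cosh x]
    · have hR : R ≤ |x| := by
        rcases not_and_or.mp hside with h | h
        · linarith [neg_le_abs x, not_lt.mp h]
        · linarith [le_abs_self x, not_lt.mp h]
      have hcosh : cosh R ≤ cosh x :=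
        cosh_le_cosh.2 (by rwa [abs_of_nonneg ((abs_nonneg x₀).trans hRx)])
      nlinarith [hC (x, y) ⟨trivial, hy⟩]

theorem eq_zero_of_harmonic_on_strip {v : ℝ × ℝ → ℝ}
    (hc : ContinuousOn v (univ ×ˢ Icc (-1 : ℝ) 1))
    (hb : ∃ C : ℝ, ∀ p ∈ univ ×ˢ Icc (-1 : ℝ) 1, |v p| ≤ C)
    (hd : ContDiffOn ℝ 2 v (univ ×ˢ Ioo (-1 : ℝ) 1))
    (hlap : ∀ p ∈ univ ×ˢ Ioo (-1 : ℝ) 1, lap2 v p = 0)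
    (hbc : ∀ x : ℝ, v (x, -1) = 0 ∧ v (x, 1) = 0) :
    ∀ p ∈ univ ×ˢ Icc (-1 : ℝ) 1, v p = 0 := by
  obtain ⟨C, hC⟩ := hb
  have hle := nonpos_of_subharmonic_on_strip hc ⟨C, fun p hp => (le_abs_self _).trans (hC p hp)⟩
    hd (fun p hp => (hlap p hp).ge) (fun x => by simp [hbc x])
  have hge := nonpos_of_subharmonic_on_strip (v := -v) hc.neg
    ⟨C, fun p hp => (neg_le_abs _).trans (hC p hp)⟩ hd.neg
    (fun p hp => by simp [lap2_neg, hlap p hp]) (fun x => by simp [hbc x])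
  intro p hp
  linarith [hle p hp, hge p hp, Pi.neg_apply v p]

/-- Uniqueness of the one-dimensional torsion profile on the strip: a bounded solution
of `Δu + 1 = 0` on `ℝ × [-1,1]` vanishing on both boundary lines equals `(1-y²)/2`. -/
theorem stmt8 (u : ℝ × ℝ → ℝ)
    (hc : ContinuousOn u (Set.univ ×ˢ Set.Icc (-1:ℝ) 1))
    (hb : ∃ C : ℝ, ∀ p ∈ Set.univ ×ˢ Set.Icc (-1:ℝ) 1, |u p| ≤ C)
    (hd : ContDiffOn ℝ 2 u (Set.univ ×ˢ Set.Ioo (-1:ℝ) 1))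
    (heq : ∀ p ∈ Set.univ ×ˢ Set.Ioo (-1:ℝ) 1, lap2 u p + 1 = 0)
    (hbc : ∀ x : ℝ, u (x, -1) = 0 ∧ u (x, 1) = 0) :
    ∀ p ∈ Set.univ ×ˢ Set.Icc (-1:ℝ) 1, u p = (1 - p.2 ^ 2) / 2 := by
  set w : ℝ × ℝ → ℝ := fun p => (1 - p.2 ^ 2) / 2 with hw
  have hwd : ContDiff ℝ 2 w := by fun_prop
  have hw_lap : ∀ p, lap2 w p = -1 := fun p => by simp [lap2, w]
  have hw_abs : ∀ p ∈ univ ×ˢ Icc (-1 : ℝ) 1, |w p| ≤ 1 / 2 := by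
    rintro ⟨x, y⟩ ⟨-, hy⟩
    rw [hw, abs_le]
    constructor <;> nlinarith [hy.1, hy.2]
  obtain ⟨C, hC⟩ := hb
  have hzero := eq_zero_of_harmonic_on_strip (v := u - w) (hc.sub hwd.continuous.continuousOn)
    ⟨C + 1 / 2, fun p hp => (abs_sub _ _).trans (add_le_add (hC p hp) (hw_abs p hp))⟩
    (hd.sub hwd.contDiffOn)
    (fun p hp => by
      rw [lap2_sub (hd.contDiffAt ((isOpen_univ.prod isOpen_Ioo).mem_nhds hp)) hwd.contDiffAt,
        hw_lap]
      linarith [heq p hp])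
    (fun x => by simp [w, hbc x])
  intro p hp
  simpa [sub_eq_zero] using hzero p hp
end

section
/- Let a ≥ 1, let f : ℝ → ℝ be continuous with f(s) = 1 for all s ≥ 2, and let u be continuous on the closure of Ω_a, twice continuously differentiable in Ω_a, with Δu + f(u) = 0 in Ω_a and u = 0 on the boundary of Ω_a. Then u(x,y) < (1−y²)/2 + 2 for every (x,y) ∈ Ω_a. -/
open Set Metric MeasureTheory

/-- The stadium-like convex domain `Ω_a`. -/
def stadium (φ : ℝ → ℝ) (a : ℝ) : Set (ℝ × ℝ) :=
  {p : ℝ × ℝ | -a - φ p.2 < p.1 ∧ p.1 < a + φ p.2 ∧ -1 < p.2 ∧ p.2 < 1}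

/-!
On the open set `W = Ω_a ∩ {u > 2}` we have `f(u) = 1`, so `w = u + (y² - 1)/2` satisfies
`Δw = 0` there. By the weak maximum principle (obtained from the strict one by adding `δ x²`
and letting `δ → 0`), `w` is bounded on `W` by its value at a frontier point `s` of `W`.
Either `s ∈ Ω_a`, where `u(s) ≤ 2` and `|y| < 1`, or `s ∈ ∂Ω_a`, where `u(s) = 0`; in both
cases `w(s) < 2`.
-/

open Filter Topology Bornology

lemma IsLocalMax.deriv_deriv_nonpos {f : ℝ → ℝ} {x : ℝ} (h : IsLocalMax f x)
    (hc : ContinuousAt f x) : deriv (deriv f) x ≤ 0 := by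
  by_contra! hpos
  have hconst : f =ᶠ[𝓝 x] fun _ => f x :=
    ((isLocalMin_of_deriv_deriv_pos hpos h.deriv_eq_zero hc).and h).mono
      fun y hy => le_antisymm hy.2 hy.1
  simp [hconst.deriv.deriv_eq] at hpos

lemma IsLocalMax.lap2_nonpos {u : ℝ × ℝ → ℝ} {p : ℝ × ℝ} (h : IsLocalMax u p)
    (hc : ContinuousAt u p) : lap2 u p ≤ 0 := by
  have hx : ContinuousAt (fun s : ℝ => (s, p.2)) p.1 := by fun_prop
  have hy : ContinuousAt (fun s : ℝ => (p.1, s)) p.2 := by fun_prop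
  exact add_nonpos ((h.comp_continuous hx).deriv_deriv_nonpos (hc.comp hx))
    ((h.comp_continuous hy).deriv_deriv_nonpos (hc.comp hy))

lemma deriv_deriv_add {f g : ℝ → ℝ} {x : ℝ} (hf : ContDiffAt ℝ 2 f x)
    (hg : ContDiffAt ℝ 2 g x) :
    deriv (deriv fun y => f y + g y) x = deriv (deriv f) x + deriv (deriv g) x := by
  simpa only [iteratedDeriv_succ, iteratedDeriv_zero] using iteratedDeriv_fun_add hf hg

lemma lap2_add_s11 {u v : ℝ × ℝ → ℝ} {p : ℝ × ℝ} (hu : ContDiffAt ℝ 2 u p)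
    (hv : ContDiffAt ℝ 2 v p) : lap2 (fun q => u q + v q) p = lap2 u p + lap2 v p := by
  have hx : ∀ {w : ℝ × ℝ → ℝ}, ContDiffAt ℝ 2 w p →
      ContDiffAt ℝ 2 (fun s => w (s, p.2)) p.1 := fun hw => hw.comp _ (by fun_prop)
  have hy : ∀ {w : ℝ × ℝ → ℝ}, ContDiffAt ℝ 2 w p →
      ContDiffAt ℝ 2 (fun s => w (p.1, s)) p.2 := fun hw => hw.comp _ (by fun_prop)
  rw [lap2, lap2, lap2, deriv_deriv_add (hx hu) (hx hv), deriv_deriv_add (hy hu) (hy hv)]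
  ring

lemma lap2_mul_fst_sq (c : ℝ) (p : ℝ × ℝ) : lap2 (fun q => c * q.1 ^ 2) p = 2 * c := by
  simp [lap2, mul_comm]

lemma lap2_snd_sq_sub_one_div_two (p : ℝ × ℝ) : lap2 (fun q => (q.2 ^ 2 - 1) / 2) p = 1 := by
  simp [lap2]

lemma exists_mem_frontier_isMaxOn_of_lap2_pos {W : Set (ℝ × ℝ)} {v : ℝ × ℝ → ℝ}
    (hWo : IsOpen W) (hWb : IsBounded W) (hWne : W.Nonempty)
    (hvc : ContinuousOn v (closure W)) (hv : ∀ p ∈ W, 0 < lap2 v p) :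
    ∃ q ∈ frontier W, IsMaxOn v (closure W) q := by
  obtain ⟨q, hq, hmax⟩ := hWb.isCompact_closure.exists_isMaxOn hWne.closure hvc
  refine ⟨q, ⟨hq, fun hqW => ?_⟩, hmax⟩
  rw [hWo.interior_eq] at hqW
  have hnhds : closure W ∈ 𝓝 q := mem_of_superset (hWo.mem_nhds hqW) subset_closure
  exact (hv q hqW).not_ge ((hmax.isLocalMax hnhds).lap2_nonpos (hvc.continuousAt hnhds))

lemma le_of_forall_mem_frontier_le_of_lap2_nonneg {W : Set (ℝ × ℝ)} {w : ℝ × ℝ → ℝ}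
    (hWo : IsOpen W) (hWb : IsBounded W) (hwc : ContinuousOn w (closure W))
    (hw2 : ∀ p ∈ W, ContDiffAt ℝ 2 w p) (hw : ∀ p ∈ W, 0 ≤ lap2 w p) {M : ℝ}
    (hM : ∀ q ∈ frontier W, w q ≤ M) {p : ℝ × ℝ} (hp : p ∈ W) : w p ≤ M := by
  obtain ⟨R, hR⟩ := hWb.isCompact_closure.bddAbove_image
    (f := fun q : ℝ × ℝ => q.1 ^ 2) (by fun_prop)
  have hperturb : ∀ δ > 0, w p ≤ M + δ * R := by
    intro δ hδ
    obtain ⟨q, hq, hmax⟩ := exists_mem_frontier_isMaxOn_of_lap2_pos hWo hWb ⟨p, hp⟩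
      (v := fun q => w q + δ * q.1 ^ 2) (hwc.add (by fun_prop)) fun q hq => by
        rw [lap2_add_s11 (hw2 q hq) (by fun_prop), lap2_mul_fst_sq]
        linarith [hw q hq]
    have hpq : w p + δ * p.1 ^ 2 ≤ w q + δ * q.1 ^ 2 := hmax (subset_closure hp)
    have hqR : q.1 ^ 2 ≤ R := hR ⟨q, frontier_subset_closure hq, rfl⟩
    nlinarith [hM q hq, sq_nonneg p.1]
  have hcont : Continuous fun δ : ℝ => M + δ * R := by fun_prop
  have hlim := (hcont.tendsto' 0 M (by simp)).mono_left (nhdsWithin_le_nhds (s := Ioi 0))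
  exact ge_of_tendsto hlim (eventually_nhdsWithin_of_forall hperturb)

lemma exists_mem_frontier_forall_le_of_lap2_nonneg {W : Set (ℝ × ℝ)} {w : ℝ × ℝ → ℝ}
    (hWo : IsOpen W) (hWb : IsBounded W) (hWne : W.Nonempty)
    (hwc : ContinuousOn w (closure W)) (hw2 : ∀ p ∈ W, ContDiffAt ℝ 2 w p)
    (hw : ∀ p ∈ W, 0 ≤ lap2 w p) : ∃ q ∈ frontier W, ∀ p ∈ W, w p ≤ w q := by
  have hne : (frontier W).Nonempty := nonempty_frontier_iff.mpr
    ⟨hWne, fun h => NormedSpace.unbounded_univ ℝ (ℝ × ℝ) (h ▸ hWb)⟩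
  have hcpt : IsCompact (frontier W) :=
    hWb.isCompact_closure.of_isClosed_subset isClosed_frontier frontier_subset_closure
  obtain ⟨q, hq, hmax⟩ := hcpt.exists_isMaxOn hne (hwc.mono frontier_subset_closure)
  exact ⟨q, hq, fun p hp => le_of_forall_mem_frontier_le_of_lap2_nonneg hWo hWb hwc hw2 hw
    (fun r hr => hmax hr) hp⟩

lemma isOpen_stadium {φ : ℝ → ℝ} (hφ : ContinuousOn φ (Ioo (-1) 1)) (a : ℝ) :
    IsOpen (stadium φ a) := by
  have hg : ContinuousOn (fun p : ℝ × ℝ => (a + φ p.2 + p.1, a + φ p.2 - p.1))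
      (Prod.snd ⁻¹' Ioo (-1) 1) := by
    have hφ' : ContinuousOn (fun p : ℝ × ℝ => φ p.2) (Prod.snd ⁻¹' Ioo (-1) 1) :=
      hφ.comp continuousOn_snd (mapsTo_preimage _ _)
    exact ((continuousOn_const.add hφ').add continuousOn_fst).prodMk
      ((continuousOn_const.add hφ').sub continuousOn_fst)
  convert hg.isOpen_inter_preimage (isOpen_Ioo.preimage continuous_snd)
    (isOpen_Ioi.prod isOpen_Ioi : IsOpen (Ioi (0 : ℝ) ×ˢ Ioi (0 : ℝ))) using 1
  ext p
  simp only [stadium, mem_ofPred_eq, mem_inter_iff, mem_preimage, mem_Ioo, mem_prod, mem_Ioi]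
  constructor
  · rintro ⟨h1, h2, h3, h4⟩
    exact ⟨⟨h3, h4⟩, by linarith, by linarith⟩
  · rintro ⟨⟨h3, h4⟩, h1, h2⟩
    exact ⟨by linarith, by linarith, h3, h4⟩

lemma isBounded_stadium {φ : ℝ → ℝ} (hφ : ContinuousOn φ (Icc (-1) 1)) (a : ℝ) :
    IsBounded (stadium φ a) := by
  obtain ⟨C, hC⟩ := isCompact_Icc.exists_bound_of_continuousOn hφ
  refine ((isBounded_Icc (-(a + C)) (a + C)).prod (isBounded_Icc (-1 : ℝ) 1)).subset ?_
  rintro p ⟨h1, h2, h3, h4⟩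
  have hφC := abs_le.mp (hC p.2 ⟨h3.le, h4.le⟩)
  exact ⟨⟨by linarith, by linarith⟩, h3.le, h4.le⟩

lemma sq_snd_le_one_of_mem_closure_stadium {φ : ℝ → ℝ} {a : ℝ} {p : ℝ × ℝ}
    (hp : p ∈ closure (stadium φ a)) : p.2 ^ 2 ≤ 1 := by
  have hIcc : closure (stadium φ a) ⊆ Prod.snd ⁻¹' Icc (-1) 1 :=
    closure_minimal (fun q hq => ⟨hq.2.2.1.le, hq.2.2.2.le⟩)
      (isClosed_Icc.preimage continuous_snd)
  obtain ⟨h1, h2⟩ := hIcc hp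
  nlinarith

lemma sq_snd_lt_one_of_mem_stadium {φ : ℝ → ℝ} {a : ℝ} {p : ℝ × ℝ}
    (hp : p ∈ stadium φ a) : p.2 ^ 2 < 1 := by
  obtain ⟨-, -, h1, h2⟩ := hp
  nlinarith

theorem stmt11_general (φ : ℝ → ℝ)
    (hφc : ContinuousOn φ (Set.Icc (-1) 1))
    (a : ℝ) (f : ℝ → ℝ)
    (hf1 : ∀ s : ℝ, 2 ≤ s → f s = 1)
    (u : ℝ × ℝ → ℝ)
    (hc : ContinuousOn u (closure (stadium φ a)))
    (hd : ContDiffOn ℝ 2 u (stadium φ a))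
    (heq : ∀ p ∈ stadium φ a, lap2 u p + f (u p) = 0)
    (hbc : ∀ p ∈ frontier (stadium φ a), u p = 0) :
    ∀ p ∈ stadium φ a, u p < (1 - p.2 ^ 2) / 2 + 2 := by
  intro p hp
  rcases le_or_gt (u p) 2 with hup | hup
  · linarith [sq_snd_lt_one_of_mem_stadium hp]
  have hΩo := isOpen_stadium (hφc.mono Ioo_subset_Icc_self) a
  set W := stadium φ a ∩ u ⁻¹' Ioi 2
  have hWo : IsOpen W := (hc.mono subset_closure).isOpen_inter_preimage hΩo isOpen_Ioi
  have hu2 : ∀ q ∈ W, ContDiffAt ℝ 2 u q := fun q hq => hd.contDiffAt (hΩo.mem_nhds hq.1)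
  have hlap : ∀ q ∈ W, 0 ≤ lap2 (fun q => u q + (q.2 ^ 2 - 1) / 2) q := fun q hq => by
    rw [lap2_add_s11 (hu2 q hq) (by fun_prop), lap2_snd_sq_sub_one_div_two]
    linarith [heq q hq.1, hf1 (u q) hq.2.le]
  obtain ⟨s, hs, hmax⟩ := exists_mem_frontier_forall_le_of_lap2_nonneg
    (w := fun q => u q + (q.2 ^ 2 - 1) / 2) hWo
    ((isBounded_stadium hφc a).subset inter_subset_left) ⟨p, hp, hup⟩
    ((hc.mono (closure_mono inter_subset_left)).add (by fun_prop))
    (fun q hq => (hu2 q hq).add (by fun_prop)) hlap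
  rw [hWo.frontier_eq] at hs
  have hws : u s + (s.2 ^ 2 - 1) / 2 < 2 := by
    by_cases hsΩ : s ∈ stadium φ a
    · have hus : u s ≤ 2 := not_lt.mp fun h => hs.2 ⟨hsΩ, h⟩
      linarith [sq_snd_lt_one_of_mem_stadium hsΩ]
    · have hsΩ' : s ∈ closure (stadium φ a) := closure_mono inter_subset_left hs.1
      have hus : u s = 0 := hbc s (hΩo.frontier_eq ▸ ⟨hsΩ', hsΩ⟩)
      linarith [sq_snd_le_one_of_mem_closure_stadium hsΩ']
  linarith [hmax p ⟨hp, hup⟩]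

theorem stmt11 (φ : ℝ → ℝ)
    (hφc : ContinuousOn φ (Set.Icc (-1) 1)) (hφ0 : ∀ y ∈ Set.Icc (-1:ℝ) 1, 0 ≤ φ y)
    (hφcc : ConcaveOn ℝ (Set.Icc (-1:ℝ) 1) φ) (hφe : ∀ y : ℝ, φ (-y) = φ y)
    (hφm1 : φ (-1) = 0) (hφ1 : φ 1 = 0)
    (a : ℝ) (ha : 1 ≤ a) (f : ℝ → ℝ) (hfc : Continuous f)
    (hf1 : ∀ s : ℝ, 2 ≤ s → f s = 1)
    (u : ℝ × ℝ → ℝ)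
    (hc : ContinuousOn u (closure (stadium φ a)))
    (hd : ContDiffOn ℝ 2 u (stadium φ a))
    (heq : ∀ p ∈ stadium φ a, lap2 u p + f (u p) = 0)
    (hbc : ∀ p ∈ frontier (stadium φ a), u p = 0) :
    ∀ p ∈ stadium φ a, u p < (1 - p.2 ^ 2) / 2 + 2 :=
  stmt11_general φ hφc a f hf1 u hc hd heq hbc
end
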